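/- Let n > 1 have prime factorization n = p_1^{a_1}···p_k^{a_k}, let τ(n) be the number of divisors of n, let A be the adjacency matrix of the modified divisor prime graph G*_Dp(n), and let B be the positive semidefinite matrix with B² = (A − (1/τ(n))I)². For x ∈ {1,2} set λ_x^{(i)} = (1 + (−1)^{x−1}√(4a_i+1))/2, and for a divisor v of n set w_{v,x}^{(i)} = ((−1)^{x−1}/√(4a_i+1))·λ_x^{(i)} if p_i does not divide v, and w_{v,x}^{(i)} = ((−1)^{x−1}/√(4a_i+1))·(λ_x^{(i)})^{-1} if p_i divides v. Then for every divisor v of n, the diagonal entry of B at v equals (1/τ(n))·(1 − Σ_{x ∈ {1,2}^k} Π_{i=1}^k w_{v,x_i}^{(i)}) + Σ_{x ∈ {1,2}^k} |Π_{i=1}^k λ_{x_i}^{(i)} − 1/τ(n)| · Π_{i=1}^k w_{v,x_i}^{(i)}. -/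

import Mathlib

/-!
The adjacency matrix `A` of the modified divisor prime graph of `n = ∏ pᵢ ^ aᵢ` is the tensor
product over `i` of the `(aᵢ + 1) × (aᵢ + 1)` matrices indexed by exponents `0, …, aᵢ` whose only
nonzero entries lie in row and column `0`. Each factor has rank two, with eigenvalues the roots
`λ₁, λ₂` of `λ² = λ + aᵢ` and eigenvectors `(λ, 1, …, 1)`. Hence `A = ∑ₓ λₓ Pₓ` for the `2ᵏ`
pairwise orthogonal rank-one projections `Pₓ` onto the tensor products of these eigenvectors,
and with `c = 1/τ(n)` the unique positive semidefinite square root of `(A - c I)²` is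
`c (I - ∑ₓ Pₓ) + ∑ₓ |λₓ - c| Pₓ`. Its diagonal is read off from `Pₓ v v = ∏ᵢ w_{v,xᵢ}^{(i)}`.
-/

/-- `λ_x^{(i)} = (1 + (-1)^{x-1} √(4 aᵢ + 1)) / 2`, where the index `x ∈ {1, 2}` is
encoded by a `Bool` (`true` for `x = 1`, `false` for `x = 2`) and `ai` is the exponent
of the `i`-th prime. -/
noncomputable def lamMDP (ai : ℕ) (x : Bool) : ℝ :=
  (1 + (if x then 1 else -1) * Real.sqrt (4 * (ai : ℝ) + 1)) / 2

/-- The weight `w_{v,x}^{(i)} = ((-1)^{x-1} / √(4 aᵢ + 1)) · λ_x^{(i)}` if `pᵢ ∤ v`,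
and `((-1)^{x-1} / √(4 aᵢ + 1)) · (λ_x^{(i)})⁻¹` if `pᵢ ∣ v`; the proposition `pdvd`
encodes `pᵢ ∣ v`. -/
noncomputable def wMDP (ai : ℕ) (x : Bool) (pdvd : Prop) [Decidable pdvd] : ℝ :=
  ((if x then 1 else -1) / Real.sqrt (4 * (ai : ℝ) + 1)) *
    (if pdvd then (lamMDP ai x)⁻¹ else lamMDP ai x)

/-- The squared norm of `(λ_x, 1, …, 1) ∈ ℝ^{a+1}`, the `λ_x`-eigenvector of the one-prime factor
of the adjacency matrix (with `a` the exponent of that prime). -/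
noncomputable def nuMDP (a : ℕ) (x : Bool) : ℝ := lamMDP a x ^ 2 + a

section OnePrime

variable {a : ℕ}

lemma sqrt_four_mul_add_one_sq (a : ℕ) : √(4 * (a : ℝ) + 1) ^ 2 = 4 * a + 1 :=
  Real.sq_sqrt (by positivity)

lemma lamMDP_mul_lamMDP_add (a : ℕ) (x y : Bool) :
    lamMDP a x * lamMDP a y + a = if x = y then nuMDP a x else 0 := by
  by_cases hxy : x = y
  · rw [if_pos hxy, hxy, nuMDP, sq]
  · rw [if_neg hxy]
    cases x <;> cases y <;> simp only [lamMDP, if_true, Bool.false_eq_true, if_false,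
      not_true_eq_false] at hxy ⊢ <;> linear_combination -sqrt_four_mul_add_one_sq a / 4

lemma nuMDP_pos (ha : a ≠ 0) (x : Bool) : 0 < nuMDP a x := by
  unfold nuMDP; positivity

lemma nuMDP_eq (a : ℕ) (x : Bool) :
    nuMDP a x = (if x then 1 else -1) * √(4 * (a : ℝ) + 1) * lamMDP a x := by
  cases x <;> simp only [nuMDP, lamMDP, Bool.false_eq_true, if_true, if_false] <;>
    linear_combination -sqrt_four_mul_add_one_sq a / 4

lemma lamMDP_ne_zero (ha : a ≠ 0) (x : Bool) : lamMDP a x ≠ 0 := fun h =>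
  (nuMDP_pos ha x).ne' (by rw [nuMDP_eq, h, mul_zero])

-- The one-prime factor of the spectral decomposition `A = ∑ₓ λₓ Pₓ`, entrywise.
lemma sum_lamMDP_mul_div_nuMDP (ha : a ≠ 0) (p q : Prop) [Decidable p] [Decidable q] :
    ∑ x : Bool, lamMDP a x * ((if p then 1 else lamMDP a x) * (if q then 1 else lamMDP a x)) /
      nuMDP a x = if p ∧ q then 0 else 1 := by
  have hr : √(4 * (a : ℝ) + 1) ≠ 0 := by positivity
  have hs (x : Bool) (z : ℝ) : lamMDP a x * z / nuMDP a x =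
      (if x then 1 else -1) * z / √(4 * (a : ℝ) + 1) := by
    rw [nuMDP_eq]
    cases x <;> field_simp [lamMDP_ne_zero ha] <;> simp
  simp only [Fintype.sum_bool, hs, if_true, Bool.false_eq_true, if_false]
  by_cases hp : p <;> by_cases hq : q <;>
    simp only [hp, hq, ↓reduceIte, lamMDP, one_mul, mul_one, neg_mul, one_div, and_self, and_true,
      and_false, Bool.false_eq_true] <;> field_simp <;> ring

lemma sq_ite_div_nuMDP (ha : a ≠ 0) (x : Bool) (p : Prop) [Decidable p] :
    (if p then 1 else lamMDP a x) ^ 2 / nuMDP a x = wMDP a x p := by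
  have hr : √(4 * (a : ℝ) + 1) ≠ 0 := by positivity
  have hl := lamMDP_ne_zero ha x
  rw [nuMDP_eq, wMDP]
  by_cases hp : p <;> cases x <;> simp only [hp, Bool.false_eq_true, if_true, if_false] <;>
    field_simp

end OnePrime

namespace Nat

variable {n : ℕ}

lemma factorization_eq_zero_of_dvd_of_notMem_primeFactors {d p : ℕ} (hn : n ≠ 0) (hd : d ∣ n)
    (hp : p ∉ n.primeFactors) : d.factorization p = 0 := by
  rw [← Finsupp.notMem_support_iff, support_factorization]
  exact fun h => hp (primeFactors_mono hd hn h)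

lemma factorization_ne_zero_of_mem_primeFactors {p : ℕ} (hp : p ∈ n.primeFactors) :
    n.factorization p ≠ 0 :=
  Finsupp.mem_support_iff.mp hp

def divisorExponents (n : ℕ) (d : n.divisors) (p : n.primeFactors) :
    Fin (n.factorization p + 1) :=
  ⟨d.1.factorization p, lt_succ_of_le <|
    (factorization_le_iff_dvd (pos_of_mem_divisors d.2).ne' (mem_divisors.mp d.2).2).mpr
      (mem_divisors.mp d.2).1 p⟩

lemma divisorExponents_injective (hn : n ≠ 0) : Function.Injective (divisorExponents n) := by
  intro d₁ d₂ h
  refine Subtype.ext <| factorization_inj (pos_of_mem_divisors d₁.2).ne'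
    (pos_of_mem_divisors d₂.2).ne' <| Finsupp.ext fun p => ?_
  by_cases hp : p ∈ n.primeFactors
  · exact congrArg Fin.val (congrFun h ⟨p, hp⟩)
  · rw [factorization_eq_zero_of_dvd_of_notMem_primeFactors hn (mem_divisors.mp d₁.2).1 hp,
      factorization_eq_zero_of_dvd_of_notMem_primeFactors hn (mem_divisors.mp d₂.2).1 hp]

lemma divisorExponents_bijective (hn : n ≠ 0) : Function.Bijective (divisorExponents n) := by
  refine (Fintype.bijective_iff_injective_and_card _).mpr ⟨divisorExponents_injective hn, ?_⟩
  simp only [Fintype.card_coe, card_divisors hn, Fintype.card_pi, Fintype.card_fin]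
  exact (Finset.prod_coe_sort n.primeFactors (n.factorization · + 1)).symm

lemma sum_divisors_prod_ite_dvd {R : Type*} [CommSemiring R] (hn : n ≠ 0)
    (b c : n.primeFactors → R) :
    ∑ d : n.divisors, ∏ p : n.primeFactors, (if p.1 ∣ d.1 then b p else c p) =
      ∏ p : n.primeFactors, (c p + n.factorization p * b p) := by
  have hdvd (d : n.divisors) (p : n.primeFactors) :
      p.1 ∣ d.1 ↔ (divisorExponents n d p : ℕ) ≠ 0 := by
    rw [(prime_of_mem_primeFactors p.2).dvd_iff_one_le_factorization (pos_of_mem_divisors d.2).ne',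
      one_le_iff_ne_zero]
    rfl
  rw [Fintype.sum_bijective _ (divisorExponents_bijective hn) _
      (fun t => ∏ p, if (t p : ℕ) ≠ 0 then b p else c p)
      (fun d => Finset.prod_congr rfl fun p _ => if_congr (hdvd d p) rfl rfl),
    ← Fintype.prod_sum fun p (j : Fin _) => if (j : ℕ) ≠ 0 then b p else c p]
  refine Finset.prod_congr rfl fun p _ => ?_
  simp [Fin.sum_univ_succ]

lemma coprime_iff_forall_primeFactors {u w : ℕ} (hn : n ≠ 0) (hu : u ∣ n) :
    u.Coprime w ↔ ∀ p ∈ n.primeFactors, ¬(p ∣ u ∧ p ∣ w) := by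
  rw [← not_iff_not, Prime.not_coprime_iff_dvd]
  push Not
  constructor
  · rintro ⟨p, hp, hpu, hpw⟩
    exact ⟨p, mem_primeFactors.mpr ⟨hp, hpu.trans hu, hn⟩, hpu, hpw⟩
  · rintro ⟨p, hp, hpu, hpw⟩
    exact ⟨p, prime_of_mem_primeFactors hp, hpu, hpw⟩

end Nat

namespace Matrix

variable {m ι : Type*} [Fintype m] [DecidableEq ι]

lemma posSemidef_smul_vecMulVec_self (g : m → ℝ) {t : ℝ} (ht : 0 ≤ t) :
    (t • vecMulVec g g).PosSemidef := by
  simpa using (posSemidef_vecMulVec_self_star g).smul ht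

lemma inv_smul_vecMulVec_mul_inv_smul_vecMulVec {g : ι → m → ℝ} {ν : ι → ℝ}
    (hg : ∀ x y, g x ⬝ᵥ g y = if x = y then ν x else 0) (hν : ∀ x, ν x ≠ 0) (x y : ι) :
    ((ν x)⁻¹ • vecMulVec (g x) (g x)) * ((ν y)⁻¹ • vecMulVec (g y) (g y)) =
      if x = y then (ν x)⁻¹ • vecMulVec (g x) (g x) else 0 := by
  rw [smul_mul_smul_comm, vecMulVec_mul_vecMulVec, hg]
  split_ifs with hxy
  · subst hxy
    rw [vecMulVec_smul, smul_smul, mul_assoc, inv_mul_cancel₀ (hν x), mul_one]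
  · simp

variable [DecidableEq m] [Fintype ι] {P : ι → Matrix m m ℝ}

lemma sum_smul_mul_sum_smul (hP : ∀ x y, P x * P y = if x = y then P x else 0)
    (d e : ι → ℝ) : (∑ x, d x • P x) * (∑ x, e x • P x) = ∑ x, (d x * e x) • P x := by
  simp only [Finset.sum_mul_sum, smul_mul_smul_comm, hP, smul_ite, smul_zero,
    Finset.sum_ite_eq, Finset.mem_univ, if_true]

lemma smul_one_add_sum_smul_sq (hP : ∀ x y, P x * P y = if x = y then P x else 0)
    (e : ℝ) (d : ι → ℝ) :
    (e • 1 + ∑ x, d x • P x) ^ 2 = (e * e) • 1 + ∑ x, (2 * e * d x + d x * d x) • P x := by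
  have hsum : ∑ x, (2 * e * d x + d x * d x) • P x =
      e • ∑ x, d x • P x + e • ∑ x, d x • P x + ∑ x, (d x * d x) • P x := by
    simp only [Finset.smul_sum, smul_smul, ← Finset.sum_add_distrib, ← add_smul]
    congr! 2; ring
  rw [hsum, sq, add_mul, mul_add, mul_add, sum_smul_mul_sum_smul hP, smul_mul_smul_comm,
    smul_mul_assoc, mul_smul_comm, one_mul, mul_one, one_mul]
  abel

lemma posSemidef_one_sub_sum (hPsd : ∀ x, (P x).PosSemidef)
    (hP : ∀ x y, P x * P y = if x = y then P x else 0) : (1 - ∑ x, P x).PosSemidef := by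
  have hS : (∑ x, P x) * (∑ x, P x) = ∑ x, P x := by
    simpa using sum_smul_mul_sum_smul hP 1 1
  have hQ : (1 - ∑ x, P x)ᴴ = 1 - ∑ x, P x := by
    rw [conjTranspose_sub, conjTranspose_one, conjTranspose_sum]
    simp only [fun x => (hPsd x).1.eq]
  have hQQ : (1 - ∑ x, P x) * (1 - ∑ x, P x) = 1 - ∑ x, P x := by
    rw [sub_mul, mul_sub, mul_sub, hS]; simp
  have := posSemidef_conjTranspose_mul_self (1 - ∑ x, P x)
  rwa [hQ, hQQ] at this

theorem eq_smul_one_sub_sum_add_sum_abs_smul (hPsd : ∀ x, (P x).PosSemidef)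
    (hP : ∀ x y, P x * P y = if x = y then P x else 0) {lam : ι → ℝ} {c : ℝ} (hc : 0 ≤ c)
    {B : Matrix m m ℝ} (hB : B.PosSemidef) (hBsq : B ^ 2 = (∑ x, lam x • P x - c • 1) ^ 2) :
    B = c • (1 - ∑ x, P x) + ∑ x, |lam x - c| • P x := by
  have hC : (c • (1 - ∑ x, P x) + ∑ x, |lam x - c| • P x).PosSemidef :=
    ((posSemidef_one_sub_sum hPsd hP).smul hc).add
      (posSemidef_sum _ fun x _ => (hPsd x).smul (abs_nonneg _))
  have hCform : c • (1 - ∑ x, P x) + ∑ x, |lam x - c| • P x =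
      c • 1 + ∑ x, (|lam x - c| - c) • P x := by
    simp only [smul_sub, sub_smul, Finset.sum_sub_distrib, Finset.smul_sum]; abel
  have hAform : ∑ x, lam x • P x - c • 1 = (-c) • 1 + ∑ x, lam x • P x := by
    rw [neg_smul]; abel
  open scoped MatrixOrder in
  refine (CFC.sq_eq_sq_iff B _ hB.nonneg hC.nonneg).mp (hBsq.trans ?_)
  rw [hCform, hAform, smul_one_add_sum_smul_sq hP, smul_one_add_sum_smul_sq hP]
  congr 2
  · ring
  · ext1 x
    congr 1
    linear_combination -abs_mul_abs_self (lam x - c)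

end Matrix

section ModifiedDivisorPrimeGraph

open Matrix

variable {n : ℕ}

-- The tensor product of the one-prime eigenvectors `(λ, 1, …, 1)`, indexed by exponents: the
-- exponent of `p` in `d` is `0` exactly when `p ∤ d`.
noncomputable def eigvecMDP (n : ℕ) (x : n.primeFactors → Bool) (d : n.divisors) : ℝ :=
  ∏ p : n.primeFactors, if p.1 ∣ d.1 then 1 else lamMDP (n.factorization p) (x p)

noncomputable def projMDP (n : ℕ) (x : n.primeFactors → Bool) :
    Matrix n.divisors n.divisors ℝ :=
  (∏ p : n.primeFactors, nuMDP (n.factorization p) (x p))⁻¹ •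
    vecMulVec (eigvecMDP n x) (eigvecMDP n x)

lemma eigvecMDP_dotProduct (hn : n ≠ 0) (x y : n.primeFactors → Bool) :
    eigvecMDP n x ⬝ᵥ eigvecMDP n y =
      if x = y then ∏ p : n.primeFactors, nuMDP (n.factorization p) (x p) else 0 := by
  have hmul (d : n.divisors) : eigvecMDP n x d * eigvecMDP n y d =
      ∏ p : n.primeFactors, if p.1 ∣ d.1 then 1 else
        lamMDP (n.factorization p) (x p) * lamMDP (n.factorization p) (y p) := by
    rw [eigvecMDP, eigvecMDP, ← Finset.prod_mul_distrib]
    exact Finset.prod_congr rfl fun p _ => by split_ifs <;> simp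
  simp only [dotProduct, hmul, Nat.sum_divisors_prod_ite_dvd hn, mul_one,
    lamMDP_mul_lamMDP_add]
  split_ifs with hxy
  · subst hxy; simp
  · obtain ⟨p, hp⟩ := Function.ne_iff.mp hxy
    exact Finset.prod_eq_zero (Finset.mem_univ p) (if_neg hp)

lemma posSemidef_projMDP (x : n.primeFactors → Bool) : (projMDP n x).PosSemidef :=
  posSemidef_smul_vecMulVec_self _ <| inv_nonneg.mpr <| Finset.prod_nonneg fun p _ =>
    (nuMDP_pos (Nat.factorization_ne_zero_of_mem_primeFactors p.2) _).le

lemma projMDP_mul_projMDP (hn : n ≠ 0) (x y : n.primeFactors → Bool) :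
    projMDP n x * projMDP n y = if x = y then projMDP n x else 0 :=
  inv_smul_vecMulVec_mul_inv_smul_vecMulVec (eigvecMDP_dotProduct hn)
    (fun _ => Finset.prod_ne_zero_iff.mpr fun p _ =>
      (nuMDP_pos (Nat.factorization_ne_zero_of_mem_primeFactors p.2) _).ne') x y

lemma projMDP_apply (x : n.primeFactors → Bool) (u w : n.divisors) :
    projMDP n x u w = ∏ p : n.primeFactors,
      (if p.1 ∣ u.1 then 1 else lamMDP (n.factorization p) (x p)) *
        (if p.1 ∣ w.1 then 1 else lamMDP (n.factorization p) (x p)) /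
        nuMDP (n.factorization p) (x p) := by
  simp only [projMDP, Matrix.smul_apply, vecMulVec_apply, eigvecMDP, smul_eq_mul,
    Finset.prod_div_distrib, Finset.prod_mul_distrib]
  ring

lemma projMDP_apply_self (x : n.primeFactors → Bool) (v : n.divisors) :
    projMDP n x v v = ∏ p : n.primeFactors, wMDP (n.factorization p) (x p) (p.1 ∣ v.1) := by
  simp only [projMDP_apply, ← sq]
  exact Finset.prod_congr rfl fun p _ =>
    sq_ite_div_nuMDP (Nat.factorization_ne_zero_of_mem_primeFactors p.2) _ _

lemma sum_prod_lamMDP_smul_projMDP (hn : n ≠ 0) (u w : n.divisors) :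
    (∑ x, (∏ p : n.primeFactors, lamMDP (n.factorization p) (x p)) • projMDP n x) u w =
      if Nat.gcd u.1 w.1 = 1 then 1 else 0 := by
  simp only [Matrix.sum_apply, Matrix.smul_apply, smul_eq_mul, projMDP_apply,
    ← Finset.prod_mul_distrib, ← mul_div_assoc]
  rw [← Fintype.prod_sum fun (p : n.primeFactors) (b : Bool) => lamMDP (n.factorization p) b *
    ((if p.1 ∣ u.1 then 1 else lamMDP (n.factorization p) b) *
      (if p.1 ∣ w.1 then 1 else lamMDP (n.factorization p) b)) / nuMDP (n.factorization p) b]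
  have hcop : u.1.gcd w.1 = 1 ↔ ∀ p : n.primeFactors, ¬(p.1 ∣ u.1 ∧ p.1 ∣ w.1) := by
    rw [← Nat.coprime_iff_gcd_eq_one,
      Nat.coprime_iff_forall_primeFactors hn (Nat.mem_divisors.mp u.2).1, Subtype.forall]
  have ha (p : n.primeFactors) := Nat.factorization_ne_zero_of_mem_primeFactors p.2
  simp only [sum_lamMDP_mul_div_nuMDP (ha _), hcop]
  rw [Finset.prod_congr rfl fun p _ => (ite_not _ _ _).symm, Finset.prod_boole]
  simp only [Finset.mem_univ, forall_const]

end ModifiedDivisorPrimeGraph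

theorem vertexEnergy_modifiedDivisorPrimeGraph_general (n : ℕ)
    (A B : Matrix {d : ℕ // d ∈ n.divisors} {d : ℕ // d ∈ n.divisors} ℝ)
    (hA : ∀ u v : {d : ℕ // d ∈ n.divisors},
      A u v = if Nat.gcd u.1 v.1 = 1 then 1 else 0)
    (hB : B.PosSemidef)
    (hBsq : B ^ 2 = (A - (1 / (n.divisors.card : ℝ)) • 1) ^ 2)
    (v : {d : ℕ // d ∈ n.divisors}) :
    B v v =
      (1 / (n.divisors.card : ℝ)) *
          (1 - ∑ x : {q : ℕ // q ∈ n.primeFactors} → Bool,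
                ∏ i : {q : ℕ // q ∈ n.primeFactors},
                  wMDP (n.factorization i.1) (x i) (i.1 ∣ v.1)) +
        ∑ x : {q : ℕ // q ∈ n.primeFactors} → Bool,
          |(∏ i : {q : ℕ // q ∈ n.primeFactors}, lamMDP (n.factorization i.1) (x i)) -
              1 / (n.divisors.card : ℝ)| *
            ∏ i : {q : ℕ // q ∈ n.primeFactors},
              wMDP (n.factorization i.1) (x i) (i.1 ∣ v.1) := by
  have hn : n ≠ 0 := (Nat.mem_divisors.mp v.2).2
  have hA_eq :
      A = ∑ x, (∏ p : n.primeFactors, lamMDP (n.factorization p) (x p)) • projMDP n x := by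
    ext u w
    rw [hA, sum_prod_lamMDP_smul_projMDP hn]
  rw [hA_eq] at hBsq
  rw [Matrix.eq_smul_one_sub_sum_add_sum_abs_smul posSemidef_projMDP (projMDP_mul_projMDP hn)
    (by positivity) hB hBsq]
  simp only [Matrix.add_apply, Matrix.smul_apply, Matrix.sub_apply, Matrix.one_apply_eq,
    Matrix.sum_apply, smul_eq_mul, projMDP_apply_self]

/-- The vertex energy of each divisor `v` of `n` in the modified divisor prime graph of
`n`: if `B` is positive semidefinite with `B² = (A - (1/τ(n))I)²`, then the diagonal
entry of `B` at `v` equals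
`(1/τ(n)) (1 - ∑_{x ∈ {1,2}^k} ∏ᵢ w_{v,xᵢ}^{(i)}) +
  ∑_{x ∈ {1,2}^k} |∏ᵢ λ_{xᵢ}^{(i)} - 1/τ(n)| ∏ᵢ w_{v,xᵢ}^{(i)}`. -/
theorem vertexEnergy_modifiedDivisorPrimeGraph (n : ℕ) (hn : 1 < n)
    (A B : Matrix {d : ℕ // d ∈ n.divisors} {d : ℕ // d ∈ n.divisors} ℝ)
    (hA : ∀ u v : {d : ℕ // d ∈ n.divisors},
      A u v = if Nat.gcd u.1 v.1 = 1 then 1 else 0)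
    (hB : B.PosSemidef)
    (hBsq : B ^ 2 = (A - (1 / (n.divisors.card : ℝ)) • 1) ^ 2)
    (v : {d : ℕ // d ∈ n.divisors}) :
    B v v =
      (1 / (n.divisors.card : ℝ)) *
          (1 - ∑ x : {q : ℕ // q ∈ n.primeFactors} → Bool,
                ∏ i : {q : ℕ // q ∈ n.primeFactors},
                  wMDP (n.factorization i.1) (x i) (i.1 ∣ v.1)) +
        ∑ x : {q : ℕ // q ∈ n.primeFactors} → Bool,
          |(∏ i : {q : ℕ // q ∈ n.primeFactors}, lamMDP (n.factorization i.1) (x i)) -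
              1 / (n.divisors.card : ℝ)| *
            ∏ i : {q : ℕ // q ∈ n.primeFactors},
              wMDP (n.factorization i.1) (x i) (i.1 ∣ v.1) :=
  vertexEnergy_modifiedDivisorPrimeGraph_general n A B hA hB hBsq v
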